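/- Let Λ = {x ∈ ℤ[τ] : x' ∈ Ω} for a bounded window Ω ⊂ ℝ with nonempty interior, where x' denotes Galois conjugation (a+bτ)' = a+b(1−τ). Then Λ is uniformly discrete and relatively dense in ℝ (i.e., a Delone set). -/

import Mathlib

noncomputable def tau : ℝ := (1 + Real.sqrt 5) / 2

private lemma s5_sq : Real.sqrt 5 ^ 2 = 5 := Real.sq_sqrt (by norm_num)
private lemma s5_lt : Real.sqrt 5 < 3 := by
  nlinarith [s5_sq, Real.sqrt_nonneg 5]
private lemma s5_gt : 2 < Real.sqrt 5 := by
  nlinarith [s5_sq, Real.sqrt_nonneg 5]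

private lemma tau_sq : tau ^ 2 = tau + 1 := by
  unfold tau; nlinarith [s5_sq]
private lemma tau_gt : (3:ℝ)/2 < tau := by unfold tau; nlinarith [s5_gt]
private lemma tau_lt : tau < 2 := by unfold tau; nlinarith [s5_lt]
private lemma sigma_sq : (1 - tau) ^ 2 = (1 - tau) + 1 := by nlinarith [tau_sq]
private lemma sigma_abs : |1 - tau| < 1 := by
  rw [abs_lt]; constructor <;> nlinarith [tau_gt, tau_lt]
private lemma sigma_ne : (1 : ℝ) - tau ≠ 0 := by nlinarith [tau_gt]

private def GH : ℕ → ℤ × ℤ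
  | 0 => (1, 0)
  | n+1 => ((GH n).2, (GH n).1 + (GH n).2)

private lemma key_pow (y : ℝ) (hy : y ^ 2 = y + 1) :
    ∀ n : ℕ, y ^ n = ((GH n).1 : ℝ) + ((GH n).2 : ℝ) * y := by
  intro n
  induction n with
  | zero => simp [GH]
  | succ n ih =>
    have : y ^ (n+1) = y ^ n * y := by ring
    rw [this, ih, GH]
    push_cast
    linear_combination ((GH n).2 : ℝ) * hy

private lemma norm_ne (m n : ℤ) (h : ¬ (m = 0 ∧ n = 0)) :
    m ^ 2 + m * n - n ^ 2 ≠ 0 := by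
  intro he
  have hn : n ≠ 0 := by
    rintro rfl
    simp at he
    exact h ⟨by nlinarith, rfl⟩
  have h5 : (2*(m:ℝ)+(n:ℝ)) ^ 2 = 5 * (n:ℝ) ^ 2 := by
    have h5' : (2*m+n) ^ 2 = 5 * n ^ 2 := by linear_combination 4 * he
    exact_mod_cast h5'
  have hs : Real.sqrt 5 = |2*(m:ℝ)+(n:ℝ)| / |(n:ℝ)| := by
    have h1 : Real.sqrt ((2*(m:ℝ)+(n:ℝ))^2) = |2*(m:ℝ)+(n:ℝ)| := Real.sqrt_sq_eq_abs _
    have h2 : Real.sqrt ((2*(m:ℝ)+(n:ℝ))^2) = Real.sqrt 5 * |(n:ℝ)| := by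
      rw [h5, Real.sqrt_mul (by norm_num), Real.sqrt_sq_eq_abs]
    have hn' : |(n:ℝ)| ≠ 0 := by
      rw [abs_ne_zero]
      exact_mod_cast hn
    rw [h1] at h2
    field_simp [h2]
    exact h2.symm
  have hirr : Irrational (Real.sqrt 5) := by
    have := Nat.Prime.irrational_sqrt (p := 5) (by norm_num)
    simpa using this
  apply hirr
  refine ⟨(|2*(m:ℚ)+(n:ℚ)|) / |(n:ℚ)|, ?_⟩
  rw [hs]
  push_cast
  ring

theorem model_set_is_Delone
    (Ω : Set ℝ) (hbdd : Bornology.IsBounded Ω) (hint : (interior Ω).Nonempty) :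
    let Λ : Set ℝ :=
      {x : ℝ | ∃ a b : ℤ, x = (a : ℝ) + b * tau ∧ ((a : ℝ) + b * (1 - tau)) ∈ Ω}
    -- uniformly discrete
    (∃ r > (0 : ℝ), ∀ x ∈ Λ, ∀ y ∈ Λ, x ≠ y → r ≤ |x - y|) ∧
    -- relatively dense
    (∃ R > (0 : ℝ), ∀ x : ℝ, ∃ p ∈ Λ, x ≤ p ∧ p ≤ x + R) := by
  intro Λ
  obtain ⟨C₀, hC₀⟩ := hbdd.exists_norm_le
  set C : ℝ := max C₀ 1 with hC
  have hC1 : (1:ℝ) ≤ C := le_max_right _ _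
  have hCb : ∀ ω ∈ Ω, |ω| ≤ C := fun ω hω => le_trans (hC₀ ω hω) (le_max_left _ _)
  constructor
  · -- uniform discreteness
    refine ⟨1 / (2 * C), by positivity, ?_⟩
    rintro x ⟨a, b, rfl, ha⟩ y ⟨c, d, rfl, hc⟩ hne
    set m : ℤ := a - c
    set n : ℤ := b - d
    have hmn : ¬ (m = 0 ∧ n = 0) := by
      rintro ⟨hm, hn⟩
      apply hne
      have : a = c := by omega
      have : b = d := by omega
      simp_all
    have hNnz := norm_ne m n hmn
    have hNge : (1:ℝ) ≤ |((m^2 + m*n - n^2 : ℤ) : ℝ)| := by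
      rw [← Int.cast_abs]
      exact_mod_cast Int.one_le_abs (by exact hNnz)
    have hprod : ((m:ℝ) + n * tau) * ((m:ℝ) + n * (1 - tau)) = ((m^2 + m*n - n^2 : ℤ) : ℝ) := by
      push_cast
      nlinarith [tau_sq]
    have hdiff : ((a:ℝ) + b * tau) - ((c:ℝ) + d * tau) = (m:ℝ) + n * tau := by
      push_cast [m, n]; ring
    have hstar : |(m:ℝ) + n * (1 - tau)| ≤ 2 * C := by
      have : (m:ℝ) + n * (1 - tau) = ((a:ℝ) + b * (1-tau)) - ((c:ℝ) + d * (1-tau)) := by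
        push_cast [m, n]; ring
      rw [this]
      calc |((a:ℝ) + b * (1-tau)) - ((c:ℝ) + d * (1-tau))|
          ≤ |(a:ℝ) + b * (1-tau)| + |(c:ℝ) + d * (1-tau)| := abs_sub _ _
        _ ≤ C + C := add_le_add (hCb _ ha) (hCb _ hc)
        _ = 2 * C := by ring
    rw [hdiff]
    have h1 : (1:ℝ) ≤ |(m:ℝ) + n * tau| * |(m:ℝ) + n * (1 - tau)| := by
      rw [← abs_mul, hprod]; exact hNge
    have hstarpos : 0 < |(m:ℝ) + n * (1 - tau)| := by
      rcases (abs_nonneg ((m:ℝ) + n * (1 - tau))).lt_or_eq with h | h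
      · exact h
      · exfalso; rw [← h] at h1; simp at h1; linarith
    rw [div_le_iff₀ (by positivity)]
    calc (1:ℝ) ≤ |(m:ℝ) + n * tau| * |(m:ℝ) + n * (1 - tau)| := h1
      _ ≤ |(m:ℝ) + n * tau| * (2 * C) := by
          apply mul_le_mul_of_nonneg_left hstar (abs_nonneg _)
  · -- relative density
    obtain ⟨c, hc⟩ := hint
    obtain ⟨ε, hε, hball⟩ : ∃ ε > 0, Metric.ball c ε ⊆ Ω :=
      mem_interior_iff_mem_nhds.mp hc |> Metric.mem_nhds_iff.mp
    obtain ⟨N, hN⟩ : ∃ N : ℕ, |1 - tau| ^ N < ε / 2 :=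
      exists_pow_lt_of_lt_one (by positivity) sigma_abs
    have htaupos : (0:ℝ) < tau := by nlinarith [tau_gt]
    have htpos : (0:ℝ) < tau ^ N := pow_pos htaupos N
    refine ⟨6 * tau ^ N, by nlinarith [htpos], fun x => ?_⟩
    set ξ : ℝ := x + 3 * tau ^ N with hξ
    set σ : ℝ := 1 - tau with hσ
    have hσN : σ ^ N ≠ 0 := pow_ne_zero _ sigma_ne
    set β : ℝ := (ξ / tau ^ N - c / σ ^ N) / Real.sqrt 5 with hβ
    set α : ℝ := ξ / tau ^ N - β * tau with hα
    have hsum1 : α + β * tau = ξ / tau ^ N := by rw [hα]; ring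
    have hsum2 : α + β * σ = c / σ ^ N := by
      have hs5 : Real.sqrt 5 ≠ 0 := by nlinarith [s5_gt]
      have hst : tau - σ = Real.sqrt 5 := by rw [hσ]; unfold tau; ring
      have hb5 : β * Real.sqrt 5 = ξ / tau ^ N - c / σ ^ N := by
        rw [hβ]; field_simp
      rw [hα]
      linear_combination (-1 : ℝ) * hb5 - β * hst
    set a₀ : ℤ := ⌊α⌋ with ha₀
    set b₀ : ℤ := ⌊β⌋ with hb₀
    have hfa1 : (a₀:ℝ) ≤ α := Int.floor_le α
    have hfa2 : α < a₀ + 1 := Int.lt_floor_add_one α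
    have hfb1 : (b₀:ℝ) ≤ β := Int.floor_le β
    have hfb2 : β < b₀ + 1 := Int.lt_floor_add_one β
    set A : ℤ := a₀ * (GH N).1 + b₀ * (GH N).2 with hA
    set B : ℤ := a₀ * (GH N).2 + b₀ * ((GH N).1 + (GH N).2) with hB
    have hptau : (A:ℝ) + B * tau = ((a₀:ℝ) + b₀ * tau) * tau ^ N := by
      rw [key_pow tau tau_sq N, hA, hB]
      push_cast
      linear_combination (-((b₀:ℝ) * ((GH N).2 : ℝ))) * tau_sq
    have hpsig : (A:ℝ) + B * σ = ((a₀:ℝ) + b₀ * σ) * σ ^ N := by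
      rw [hσ, key_pow (1 - tau) sigma_sq N, hA, hB]
      push_cast
      linear_combination (-((b₀:ℝ) * ((GH N).2 : ℝ))) * sigma_sq
    have herr1 : |((a₀:ℝ) + b₀ * tau) - ξ / tau ^ N| ≤ 3 := by
      rw [← hsum1]
      have : ((a₀:ℝ) + b₀ * tau) - (α + β * tau) = (a₀ - α) + (b₀ - β) * tau := by ring
      rw [this]
      have h1 : |(a₀:ℝ) - α| ≤ 1 := by rw [abs_le]; constructor <;> linarith
      have h2 : |((b₀:ℝ) - β) * tau| ≤ 2 := by
        rw [abs_mul]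
        have : |(b₀:ℝ) - β| ≤ 1 := by rw [abs_le]; constructor <;> linarith
        have ht : |tau| ≤ 2 := by rw [abs_le]; constructor <;> nlinarith [tau_gt, tau_lt]
        calc |(b₀:ℝ) - β| * |tau| ≤ 1 * 2 := by
              apply mul_le_mul this ht (abs_nonneg _) (by norm_num)
          _ = 2 := by ring
      calc |((a₀:ℝ) - α) + ((b₀:ℝ) - β) * tau| ≤ |(a₀:ℝ) - α| + |((b₀:ℝ) - β) * tau| :=
            abs_add_le _ _
        _ ≤ 3 := by linarith
    have herr2 : |((a₀:ℝ) + b₀ * σ) - c / σ ^ N| ≤ 2 := by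
      rw [← hsum2]
      have : ((a₀:ℝ) + b₀ * σ) - (α + β * σ) = (a₀ - α) + (b₀ - β) * σ := by ring
      rw [this]
      have h1 : |(a₀:ℝ) - α| ≤ 1 := by rw [abs_le]; constructor <;> linarith
      have h2 : |((b₀:ℝ) - β) * σ| ≤ 1 := by
        rw [abs_mul]
        have hb : |(b₀:ℝ) - β| ≤ 1 := by rw [abs_le]; constructor <;> linarith
        have hsab : |σ| ≤ 1 := le_of_lt sigma_abs
        calc |(b₀:ℝ) - β| * |σ| ≤ 1 * 1 := by
              apply mul_le_mul hb hsab (abs_nonneg _) (by norm_num)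
          _ = 1 := by ring
      calc |((a₀:ℝ) - α) + ((b₀:ℝ) - β) * σ| ≤ |(a₀:ℝ) - α| + |((b₀:ℝ) - β) * σ| :=
            abs_add_le _ _
        _ ≤ 2 := by linarith
    have hd : |((A:ℝ) + B * tau) - ξ| ≤ 3 * tau ^ N := by
      have hfac : ((A:ℝ) + B * tau) - ξ = (((a₀:ℝ) + b₀ * tau) - ξ / tau ^ N) * tau ^ N := by
        rw [hptau]; field_simp
      rw [hfac, abs_mul, abs_of_pos htpos]
      exact mul_le_mul_of_nonneg_right herr1 (le_of_lt htpos)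
    rw [abs_le] at hd
    refine ⟨(A:ℝ) + B * tau, ⟨A, B, rfl, ?_⟩, ?_, ?_⟩
    · apply hball
      rw [Metric.mem_ball, Real.dist_eq, ← hσ]
      have hfac : ((A:ℝ) + B * σ) - c = (((a₀:ℝ) + b₀ * σ) - c / σ ^ N) * σ ^ N := by
        rw [hpsig]; field_simp
      rw [hfac, abs_mul, abs_pow]
      have h1 : |((a₀:ℝ) + b₀ * σ) - c / σ ^ N| * |σ| ^ N ≤ 2 * |σ| ^ N :=
        mul_le_mul_of_nonneg_right herr2 (pow_nonneg (abs_nonneg _) _)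
      linarith [hN]
    · rw [hξ] at hd
      linarith [hd.1]
    · rw [hξ] at hd
      linarith [hd.2]
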